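/- Let a ≥ 1 and d ≥ 1 be integers, M be a finite matroid with r(M) > a, and 𝒳 ⊆ ℛ_a(M). If every X ∈ 𝒳 is d-thick in M and {E(M)} is a d-minimal cover of 𝒳 in M, then ε_M(𝒳) ≥ d^{r(M) - a} and M is d-thick. -/

import Mathlib

open Set
open scoped Classical

namespace Matroid

variable {α β : Type*}

/-- The rank of a set `X` in a matroid `M`: the maximum size of an independent subset of `X`
(appropriate for finite matroids). -/
noncomputable def rk (M : Matroid α) (X : Set α) : ℕ :=
  sSup {n | ∃ I, I ⊆ X ∧ M.Indep I ∧ I.ncard = n}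

/-- The rank `r(M)` of a matroid `M`. -/
noncomputable def rank (M : Matroid α) : ℕ := M.rk M.E

/-- The deletion `M \ D` of a set `D` from `M`. -/
def delete' (M : Matroid α) (D : Set α) : Matroid α := M ↾ (M.E \ D)

/-- The contraction `M / C` of a set `C` in `M`, defined via duality. -/
def contract' (M : Matroid α) (C : Set α) : Matroid α := (M✶.delete' C)✶

/-- `N` is a minor of `M`, i.e. `N = M / C \ D` for some sets `C` and `D`. -/
def IsMinor' (N M : Matroid α) : Prop := ∃ C D : Set α, (M.contract' C).delete' D = N

/-- An isomorphism between matroids, possibly on different ground types. -/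
def IsIso (M : Matroid α) (N : Matroid β) : Prop :=
  ∃ e : M.E ≃ N.E, ∀ I : Set M.E, M.Indep ((↑) '' I) ↔ N.Indep ((↑) '' (e '' I))

/-- `N` is isomorphic to the uniform matroid `U_{k,n}`: the ground set has `n` elements and
the independent sets are exactly the subsets with at most `k` elements. -/
def IsUnif (N : Matroid α) (k n : ℕ) : Prop :=
  N.E.Finite ∧ N.E.ncard = n ∧ ∀ I ⊆ N.E, (N.Indep I ↔ I.ncard ≤ k)

/-- `M` has a minor isomorphic to `U_{k,n}`. -/
def HasUnifMinor (M : Matroid α) (k n : ℕ) : Prop :=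
  ∃ N : Matroid α, N.IsMinor' M ∧ N.IsUnif k n

/-- `τ_a(M)`: the minimum size of a collection of subsets of `E(M)`, each of rank at most `a`,
whose union is `E(M)`. -/
noncomputable def tau (M : Matroid α) (a : ℕ) : ℕ :=
  sInf {n | ∃ 𝒞 : Finset (Set α),
    𝒞.card = n ∧ (∀ X ∈ 𝒞, X ⊆ M.E ∧ M.rk X ≤ a) ∧ M.E ⊆ ⋃₀ ↑𝒞}

/-- `M` is `d`-thick: every collection of sets, each of rank less than `r(M)`, whose union
is `E(M)`, has at least `d` members. -/
def Thick (M : Matroid α) (d : ℕ) : Prop :=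
  ∀ 𝒞 : Finset (Set α), (∀ X ∈ 𝒞, X ⊆ M.E ∧ M.rk X < M.rank) → M.E ⊆ ⋃₀ ↑𝒞 → d ≤ 𝒞.card

/-- A set `X` is `d`-thick in `M` if the restriction `M|X` is `d`-thick. -/
def ThickIn (M : Matroid α) (d : ℕ) (X : Set α) : Prop := (M ↾ X).Thick d

/-- A collection of sets is simple in `M` if its members are pairwise dissimilar,
i.e. distinct members have distinct closures. -/
def SimpleColl (M : Matroid α) (𝒳 : Finset (Set α)) : Prop :=
  ∀ X ∈ 𝒳, ∀ Y ∈ 𝒳, M.closure X = M.closure Y → X = Y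

/-- `ε_M(𝒳)`: the maximum size of a subcollection of `𝒳` that is simple in `M`. -/
noncomputable def eps (M : Matroid α) (𝒳 : Finset (Set α)) : ℕ :=
  sSup {n | ∃ 𝒴 : Finset (Set α), 𝒴 ⊆ 𝒳 ∧ M.SimpleColl 𝒴 ∧ 𝒴.card = n}

/-- `𝒳` is `d`-firm in `M`: every subcollection `𝒳'` with `|𝒳'| > |𝒳|/d` has the same rank
as `𝒳`. -/
def Firm (M : Matroid α) (d : ℕ) (𝒳 : Finset (Set α)) : Prop :=
  ∀ 𝒳' ⊆ 𝒳, 𝒳.card < d * 𝒳'.card → M.rk (⋃₀ ↑𝒳') = M.rk (⋃₀ ↑𝒳)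

/-- `ℱ` is a cover of the collection `𝒳` in `M`: every member of `𝒳` is contained in a member
of `ℱ`. -/
def CoverOf (M : Matroid α) (ℱ 𝒳 : Finset (Set α)) : Prop :=
  (∀ F ∈ ℱ, F ⊆ M.E) ∧ ∀ X ∈ 𝒳, ∃ F ∈ ℱ, X ⊆ F

/-- `ℱ` is a cover of the matroid `M`: every element of `E(M)` lies in a member of `ℱ`. -/
def CoverOfGround (M : Matroid α) (ℱ : Finset (Set α)) : Prop :=
  (∀ F ∈ ℱ, F ⊆ M.E) ∧ M.E ⊆ ⋃₀ ↑ℱ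

/-- The weight `wt^d_M(ℱ) = Σ_{F ∈ ℱ} d^{r_M(F)}`. -/
noncomputable def wt (M : Matroid α) (d : ℕ) (ℱ : Finset (Set α)) : ℕ :=
  ∑ F ∈ ℱ, d ^ M.rk F

/-- `ℱ` is a `d`-minimal cover of the collection `𝒳` in `M`. -/
def MinimalCoverOf (M : Matroid α) (d : ℕ) (ℱ 𝒳 : Finset (Set α)) : Prop :=
  M.CoverOf ℱ 𝒳 ∧ ∀ ℱ' : Finset (Set α), M.CoverOf ℱ' 𝒳 → M.wt d ℱ ≤ M.wt d ℱ'

/-- `ℱ` is a `d`-minimal cover of the matroid `M`. -/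
def MinimalCoverOfGround (M : Matroid α) (d : ℕ) (ℱ : Finset (Set α)) : Prop :=
  M.CoverOfGround ℱ ∧ ∀ ℱ' : Finset (Set α), M.CoverOfGround ℱ' → M.wt d ℱ ≤ M.wt d ℱ'

/-- `τ^d(M)`: the minimum weight of a cover of `M`. -/
noncomputable def tauW (M : Matroid α) (d : ℕ) : ℕ :=
  sInf {n | ∃ ℱ : Finset (Set α), M.CoverOfGround ℱ ∧ M.wt d ℱ = n}

/-- `𝒳` is `d`-scattered in `M`: every member of `𝒳` is `d`-thick in `M`, and
`{cl_M(X) : X ∈ 𝒳}` is a `d`-minimal cover of `𝒳` in `M`. -/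
def Scattered (M : Matroid α) (d : ℕ) (𝒳 : Finset (Set α)) : Prop :=
  (∀ X ∈ 𝒳, M.ThickIn d X) ∧ M.MinimalCoverOf d (𝒳.image M.closure) 𝒳

/-- `(M, 𝒮; L)` is an `(a, q, h, d)`-pyramid, where `h = L.length` and `L` lists the
elements `e_1, …, e_h`. -/
def IsPyramid (M : Matroid α) (𝒮 : Finset (Set α)) (L : List α) (a q d : ℕ) : Prop :=
  L.Nodup ∧ M.Indep {x | x ∈ L} ∧
  𝒮.Nonempty ∧
  (∀ S ∈ 𝒮, S ⊆ M.E ∧ M.rk S = a) ∧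
  (∀ S ∈ 𝒮, M.rk (S ∪ {x | x ∈ L}) = M.rk S + M.rk {x | x ∈ L}) ∧
  (∀ i < L.length, ∀ S ∈ 𝒮, ∃ f : Fin q → Set α,
    (∀ j, f j ∈ 𝒮) ∧
    (∀ j k, j ≠ k →
      (M.contract' {x | x ∈ L.take i}).closure (f j) ≠
        (M.contract' {x | x ∈ L.take i}).closure (f k)) ∧
    (∀ j, (M.contract' {x | x ∈ L.take (i+1)}).closure (f j) =
      (M.contract' {x | x ∈ L.take (i+1)}).closure S)) ∧
  (∀ S ∈ 𝒮, M.ThickIn d S)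

/-- `M` is representable over the field `F`. -/
def RepresentableOver (M : Matroid α) (F : Type*) [Field F] : Prop :=
  ∃ (n : ℕ) (φ : α → (Fin n → F)),
    ∀ I ⊆ M.E, (M.Indep I ↔ LinearIndependent F (fun x : I => φ x))

end Matroid

/-!
Minimality of `{E(M)}` says that every cover of `𝒳` has weight at least `d ^ r(M)`.
The closures of the members of `𝒳` form a cover with at most `ε_M(𝒳)` members, each of rank `a`,
which gives `d ^ r(M) ≤ ε_M(𝒳) · d ^ a`. If `E(M)` were covered by fewer than `d` sets of rank
less than `r(M)`, then each `X ∈ 𝒳` would lie in the closure of one of them, since otherwise their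
traces on `X` would all have rank less than `r(X)` and contradict the `d`-thickness of `X`; so
their closures would cover `𝒳` with weight less than `d · d ^ (r(M) - 1)`.
-/

namespace Matroid

section

variable {α : Type*} {M : Matroid α} {X Y I R : Set α} {d k : ℕ} {𝒳 ℱ : Finset (Set α)}

lemma IsBasis'.rk_eq_ncard [M.RankFinite] (hI : M.IsBasis' I X) : M.rk X = I.ncard := by
  refine IsGreatest.csSup_eq ⟨⟨I, hI.subset, hI.indep, rfl⟩, ?_⟩
  rintro _ ⟨J, hJX, hJ, rfl⟩
  have hIJ : J.encard ≤ I.encard := hI.encard_eq_eRk ▸ hJ.encard_le_eRk_of_subset hJX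
  rwa [← hJ.finite.cast_ncard_eq, ← hI.indep.finite.cast_ncard_eq, Nat.cast_le] at hIJ

lemma cast_rk_eq_eRk [M.RankFinite] (X : Set α) : (M.rk X : ℕ∞) = M.eRk X := by
  obtain ⟨I, hI⟩ := M.exists_isBasis' X
  rw [hI.rk_eq_ncard, hI.indep.finite.cast_ncard_eq, hI.encard_eq_eRk]

lemma rk_closure_eq [M.RankFinite] (X : Set α) : M.rk (M.closure X) = M.rk X := by
  rw [← Nat.cast_inj (R := ℕ∞), cast_rk_eq_eRk, cast_rk_eq_eRk, eRk_closure_eq]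

lemma rk_mono [M.RankFinite] : Monotone M.rk := fun X Y hXY => by
  rw [← Nat.cast_le (α := ℕ∞), cast_rk_eq_eRk, cast_rk_eq_eRk]
  exact M.eRk_mono hXY

lemma restrict_rk_eq (M : Matroid α) (h : X ⊆ R) : (M ↾ R).rk X = M.rk X := by
  simp only [rk, restrict_indep_iff]
  congr! 5 with n I
  exact ⟨fun ⟨hIX, ⟨hI, _⟩, hn⟩ => ⟨hIX, hI, hn⟩,
    fun ⟨hIX, hI, hn⟩ => ⟨hIX, ⟨hI, hIX.trans h⟩, hn⟩⟩

lemma closure_eq_closure_of_subset_of_rk_le [M.RankFinite] (hXY : X ⊆ Y) (h : M.rk Y ≤ M.rk X) :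
    M.closure X = M.closure Y := by
  rw [← Nat.cast_le (α := ℕ∞), cast_rk_eq_eRk, cast_rk_eq_eRk] at h
  exact (M.isRkFinite_set X).closure_eq_closure_of_subset_of_eRk_ge_eRk hXY h

lemma ThickIn.exists_subset_closure [M.RankFinite] {𝒞 : Finset (Set α)} (hX : M.ThickIn d X)
    (hXE : X ⊆ M.E) (hX𝒞 : X ⊆ ⋃₀ ↑𝒞) (hcard : 𝒞.card < d) : ∃ C ∈ 𝒞, X ⊆ M.closure C := by
  by_contra! hcon
  have htrace : ∀ C ∈ 𝒞, M.rk (C ∩ X) < M.rk X := fun C hC =>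
    (M.rk_mono inter_subset_right).lt_of_ne fun h => hcon C hC <|
      calc X ⊆ M.closure X := M.subset_closure X hXE
        _ = M.closure (C ∩ X) :=
          (closure_eq_closure_of_subset_of_rk_le inter_subset_right h.ge).symm
        _ ⊆ M.closure C := M.closure_subset_closure inter_subset_left
  have := hX (𝒞.image (· ∩ X)) ?_ ?_
  · exact (this.trans Finset.card_image_le).not_gt hcard
  · simp only [Finset.mem_image, restrict_ground_eq, rank]
    rintro _ ⟨C, hC, rfl⟩
    rw [restrict_rk_eq M inter_subset_right, restrict_rk_eq M Subset.rfl]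
    exact ⟨inter_subset_right, htrace C hC⟩
  · intro x hx
    obtain ⟨C, hC, hxC⟩ := hX𝒞 hx
    exact ⟨C ∩ X, Finset.mem_image_of_mem _ hC, hxC, hx⟩

lemma coverOf_image_closure {𝒴 : Finset (Set α)} (h : ∀ X ∈ 𝒳, ∃ Y ∈ 𝒴, X ⊆ M.closure Y) :
    M.CoverOf (𝒴.image M.closure) 𝒳 := by
  refine ⟨fun F hF => ?_, fun X hX => ?_⟩
  · obtain ⟨Y, -, rfl⟩ := Finset.mem_image.1 hF
    exact M.closure_subset_ground Y
  · obtain ⟨Y, hY, hXY⟩ := h X hX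
    exact ⟨M.closure Y, Finset.mem_image_of_mem _ hY, hXY⟩

lemma wt_le_card_mul_pow (hd : 1 ≤ d) (h : ∀ F ∈ ℱ, M.rk F ≤ k) :
    M.wt d ℱ ≤ ℱ.card * d ^ k :=
  ℱ.sum_le_card_nsmul _ _ fun F hF => Nat.pow_le_pow_right hd (h F hF)

lemma MinimalCoverOf.pow_rank_le_wt (h : M.MinimalCoverOf d {M.E} 𝒳) (hℱ : M.CoverOf ℱ 𝒳) :
    d ^ M.rank ≤ M.wt d ℱ := by
  simpa [wt, rank] using h.2 ℱ hℱ

lemma card_image_closure_le_eps (M : Matroid α) (𝒳 : Finset (Set α)) :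
    (𝒳.image M.closure).card ≤ M.eps 𝒳 := by
  set g := Function.invFunOn M.closure (𝒳 : Set (Set α))
  have hg : ∀ F ∈ 𝒳.image M.closure, g F ∈ 𝒳 ∧ M.closure (g F) = F := fun F hF => by
    have hF' : F ∈ M.closure '' ↑𝒳 := by simpa using hF
    exact ⟨Function.invFunOn_mem hF', Function.invFunOn_eq hF'⟩
  refine le_csSup ⟨𝒳.card, ?_⟩ ⟨(𝒳.image M.closure).image g, ?_, ?_, ?_⟩
  · rintro _ ⟨𝒴, h𝒴, -, rfl⟩
    exact Finset.card_le_card h𝒴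
  · exact Finset.image_subset_iff.2 fun F hF => (hg F hF).1
  · intro X hX Y hY h
    obtain ⟨F, hF, rfl⟩ := Finset.mem_image.1 hX
    obtain ⟨G, hG, rfl⟩ := Finset.mem_image.1 hY
    rw [(hg F hF).2, (hg G hG).2] at h
    rw [h]
  · exact Finset.card_image_of_injOn fun F hF G hG h => by
      rw [← (hg F hF).2, h, (hg G hG).2]

lemma MinimalCoverOf.pow_rank_sub_le_eps [M.RankFinite] {a : ℕ}
    (hcover : M.MinimalCoverOf d {M.E} 𝒳) (hd : 1 ≤ d) (ha : a ≤ M.rank)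
    (h𝒳 : ∀ X ∈ 𝒳, X ⊆ M.E ∧ M.rk X = a) :
    d ^ (M.rank - a) ≤ M.eps 𝒳 := by
  have hrk : ∀ F ∈ 𝒳.image M.closure, M.rk F ≤ a := by
    simp only [Finset.mem_image]
    rintro _ ⟨X, hX, rfl⟩
    rw [rk_closure_eq, (h𝒳 X hX).2]
  have hcov : M.CoverOf (𝒳.image M.closure) 𝒳 :=
    coverOf_image_closure fun X hX => ⟨X, hX, M.subset_closure X (h𝒳 X hX).1⟩
  refine Nat.le_of_mul_le_mul_right ?_ (pow_pos hd a)
  calc d ^ (M.rank - a) * d ^ a = d ^ M.rank := pow_sub_mul_pow d ha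
    _ ≤ M.wt d (𝒳.image M.closure) := hcover.pow_rank_le_wt hcov
    _ ≤ (𝒳.image M.closure).card * d ^ a := wt_le_card_mul_pow hd hrk
    _ ≤ M.eps 𝒳 * d ^ a := Nat.mul_le_mul_right _ (card_image_closure_le_eps M 𝒳)

lemma MinimalCoverOf.thick [M.RankFinite] (hcover : M.MinimalCoverOf d {M.E} 𝒳) (hd : 1 ≤ d)
    (hr : 0 < M.rank) (h𝒳 : ∀ X ∈ 𝒳, X ⊆ M.E) (hthick : ∀ X ∈ 𝒳, M.ThickIn d X) :
    M.Thick d := by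
  intro 𝒞 h𝒞 hE
  by_contra! hcard
  have hcov : M.CoverOf (𝒞.image M.closure) 𝒳 := coverOf_image_closure fun X hX =>
    (hthick X hX).exists_subset_closure (h𝒳 X hX) ((h𝒳 X hX).trans hE) hcard
  have hrk : ∀ F ∈ 𝒞.image M.closure, M.rk F ≤ M.rank - 1 := by
    simp only [Finset.mem_image]
    rintro _ ⟨C, hC, rfl⟩
    have := (h𝒞 C hC).2
    rw [rk_closure_eq]
    omega
  refine hcard.not_ge (Nat.le_of_mul_le_mul_right ?_ (pow_pos hd (M.rank - 1)))
  calc d * d ^ (M.rank - 1) = d ^ M.rank := by rw [← pow_succ', Nat.sub_add_cancel hr]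
    _ ≤ M.wt d (𝒞.image M.closure) := hcover.pow_rank_le_wt hcov
    _ ≤ (𝒞.image M.closure).card * d ^ (M.rank - 1) := wt_le_card_mul_pow hd hrk
    _ ≤ 𝒞.card * d ^ (M.rank - 1) := Nat.mul_le_mul_right _ Finset.card_image_le

end

theorem statement12_general {α : Type*} (a d : ℕ) (hd : 1 ≤ d)
    (M : Matroid α) (hM : M.Finite) (hr : a < M.rank) (𝒳 : Finset (Set α))
    (h𝒳 : ∀ X ∈ 𝒳, X ⊆ M.E ∧ M.rk X = a)
    (hthick : ∀ X ∈ 𝒳, M.ThickIn d X)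
    (hcover : M.MinimalCoverOf d {M.E} 𝒳) :
    d ^ (M.rank - a) ≤ M.eps 𝒳 ∧ M.Thick d :=
  ⟨hcover.pow_rank_sub_le_eps hd hr.le h𝒳,
    hcover.thick hd (Nat.zero_lt_of_lt hr) (fun X hX => (h𝒳 X hX).1) hthick⟩

/-- If `a, d ≥ 1`, `M` is a finite matroid with `r(M) > a`, `𝒳 ⊆ ℛ_a(M)`,
every member of `𝒳` is `d`-thick in `M`, and `{E(M)}` is a `d`-minimal cover of `𝒳` in `M`,
then `ε_M(𝒳) ≥ d^{r(M)-a}` and `M` is `d`-thick. -/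
theorem statement12 {α : Type*} (a d : ℕ) (ha : 1 ≤ a) (hd : 1 ≤ d)
    (M : Matroid α) (hM : M.Finite) (hr : a < M.rank) (𝒳 : Finset (Set α))
    (h𝒳 : ∀ X ∈ 𝒳, X ⊆ M.E ∧ M.rk X = a)
    (hthick : ∀ X ∈ 𝒳, M.ThickIn d X)
    (hcover : M.MinimalCoverOf d {M.E} 𝒳) :
    d ^ (M.rank - a) ≤ M.eps 𝒳 ∧ M.Thick d :=
  statement12_general a d hd M hM hr 𝒳 h𝒳 hthick hcover

end Matroid
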